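/- Let k be a positive integer with k ≡ 0 (mod 4), and let n, m be integers with k/4 ≤ n ≤ m ≤ k/2 − 2. Then 0 ≤ H_{2n+1} − H_{k−2n−3} + D(2n+2) − D(k−2n−2) ≤ H_{2m+1} − H_{k−2m−3} + D(2m+2) − D(k−2m−2), where D(x) := Re( ζ'(x)/ζ(x) ) for real x > 1. -/
import Mathlib


open Complex

/-- `D(x) = Re(ζ'(x)/ζ(x))` for real `x`, the (real-valued) logarithmic derivative of the
Riemann zeta function at real arguments. -/
noncomputable def zetaLogDerivReal (x : ℝ) : ℝ :=
  (deriv riemannZeta (x : ℂ) / riemannZeta (x : ℂ)).re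

open ArithmeticFunction in
lemma zetaLogDerivReal_eq {x : ℝ} (hx : 1 < x) :
    zetaLogDerivReal x = - ∑' n : ℕ, (Λ n : ℝ) / (n : ℝ) ^ x := by
  have hxre : 1 < (x : ℂ).re := by simpa using hx
  have hsum := LSeriesSummable_vonMangoldt hxre
  have hL := LSeries_vonMangoldt_eq_deriv_riemannZeta_div hxre
  have hterm : ∀ n : ℕ, (LSeries.term (fun n => (Λ n : ℂ)) (x : ℂ) n).re
      = (Λ n : ℝ) / (n : ℝ) ^ x := by
    intro n
    rcases eq_or_ne n 0 with rfl | hn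
    · simp [LSeries.term]
    · rw [LSeries.term_of_ne_zero hn]
      have : ((n : ℂ)) ^ (x : ℂ) = (((n : ℝ) ^ x : ℝ) : ℂ) := by
        rw [Complex.ofReal_cpow (Nat.cast_nonneg n)]
        norm_num
      rw [this, ← Complex.ofReal_div, Complex.ofReal_re]
  have hre : (LSeries (fun n => (Λ n : ℂ)) (x : ℂ)).re = ∑' n : ℕ, (Λ n : ℝ) / (n : ℝ) ^ x := by
    rw [LSeries, Complex.re_tsum hsum]
    exact tsum_congr hterm
  unfold zetaLogDerivReal
  have hdiv : deriv riemannZeta (x : ℂ) / riemannZeta (x : ℂ)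
      = - LSeries (fun n => (Λ n : ℂ)) (x : ℂ) := by
    rw [hL]; ring
  rw [hdiv, Complex.neg_re, neg_inj, hre]

open ArithmeticFunction in
lemma zetaLogDerivReal_summable {x : ℝ} (hx : 1 < x) :
    Summable (fun n : ℕ => (Λ n : ℝ) / (n : ℝ) ^ x) := by
  have hxre : 1 < (x : ℂ).re := by simpa using hx
  have hsum := LSeriesSummable_vonMangoldt hxre
  have := (Complex.hasSum_iff _ _).mp hsum.hasSum |>.1.summable
  refine this.congr fun n => ?_
  rcases eq_or_ne n 0 with rfl | hn
  · simp [LSeries.term]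
  · rw [LSeries.term_of_ne_zero hn]
    have : ((n : ℂ)) ^ (x : ℂ) = (((n : ℝ) ^ x : ℝ) : ℂ) := by
      rw [Complex.ofReal_cpow (Nat.cast_nonneg n)]
      norm_num
    rw [this, ← Complex.ofReal_div, Complex.ofReal_re]

open ArithmeticFunction in
lemma zetaLogDerivReal_mono {a b : ℝ} (ha : 1 < a) (hab : a ≤ b) :
    zetaLogDerivReal a ≤ zetaLogDerivReal b := by
  have hb : 1 < b := lt_of_lt_of_le ha hab
  rw [zetaLogDerivReal_eq ha, zetaLogDerivReal_eq hb, neg_le_neg_iff]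
  refine Summable.tsum_le_tsum (fun n => ?_) (zetaLogDerivReal_summable hb)
    (zetaLogDerivReal_summable ha)
  rcases eq_or_ne n 0 with rfl | hn
  · simp
  · have h1 : (1 : ℝ) ≤ (n : ℝ) := by exact_mod_cast Nat.one_le_iff_ne_zero.mpr hn
    have hpow : (n : ℝ) ^ a ≤ (n : ℝ) ^ b := Real.rpow_le_rpow_of_exponent_le h1 hab
    have hpa : (0 : ℝ) < (n : ℝ) ^ a := Real.rpow_pos_of_pos (by linarith) a
    exact div_le_div_of_nonneg_left vonMangoldt_nonneg hpa hpow

lemma harmonic_mono : Monotone (fun n => ((harmonic n : ℝ))) := by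
  intro a b hab
  have : harmonic a ≤ harmonic b := by
    unfold harmonic
    refine Finset.sum_le_sum_of_subset_of_nonneg (Finset.range_subset_range.mpr hab) ?_
    intro i _ _
    positivity
  simp only
  exact_mod_cast this

/-- For `k ≡ 0 (mod 4)` and integers `k/4 ≤ n ≤ m ≤ k/2 − 2`,
`0 ≤ H_{2n+1} − H_{k−2n−3} + D(2n+2) − D(k−2n−2)
   ≤ H_{2m+1} − H_{k−2m−3} + D(2m+2) − D(k−2m−2)`,
where `H_n` is the `n`-th harmonic number and `D(x) = Re(ζ'(x)/ζ(x))`. -/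
theorem harmonic_zetaLogDeriv_monotone
    (k : ℕ) (hk4 : k % 4 = 0) (n m : ℕ)
    (hn : k ≤ 4 * n) (hnm : n ≤ m) (hm : 2 * m + 4 ≤ k) :
    0 ≤ (harmonic (2 * n + 1) : ℝ) - (harmonic (k - 2 * n - 3) : ℝ) +
        zetaLogDerivReal ((2 * n + 2 : ℕ) : ℝ) - zetaLogDerivReal ((k - 2 * n - 2 : ℕ) : ℝ) ∧
    (harmonic (2 * n + 1) : ℝ) - (harmonic (k - 2 * n - 3) : ℝ) +
        zetaLogDerivReal ((2 * n + 2 : ℕ) : ℝ) - zetaLogDerivReal ((k - 2 * n - 2 : ℕ) : ℝ) ≤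
      (harmonic (2 * m + 1) : ℝ) - (harmonic (k - 2 * m - 3) : ℝ) +
        zetaLogDerivReal ((2 * m + 2 : ℕ) : ℝ) - zetaLogDerivReal ((k - 2 * m - 2 : ℕ) : ℝ) := by
  have hkn : 2 * n + 4 ≤ k := le_trans (by omega) hm
  -- nat inequalities
  have h1 : k - 2 * n - 3 ≤ 2 * n + 1 := by omega
  have h2 : k - 2 * n - 2 ≤ 2 * n + 2 := by omega
  have h3 : 2 ≤ k - 2 * n - 2 := by omega
  have h4 : 2 ≤ k - 2 * m - 2 := by omega
  have h5 : k - 2 * m - 2 ≤ k - 2 * n - 2 := by omega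
  have h6 : k - 2 * m - 3 ≤ k - 2 * n - 3 := by omega
  have hH1 := harmonic_mono h1
  have hH2 := harmonic_mono (Nat.add_le_add (Nat.mul_le_mul_left 2 hnm) le_rfl :
    2 * n + 1 ≤ 2 * m + 1)
  have hH3 := harmonic_mono h6
  have hD1 : zetaLogDerivReal ((k - 2 * n - 2 : ℕ) : ℝ) ≤
      zetaLogDerivReal ((2 * n + 2 : ℕ) : ℝ) := by
    refine zetaLogDerivReal_mono ?_ ?_
    · exact_mod_cast Nat.lt_of_lt_of_le one_lt_two h3
    · exact_mod_cast h2
  have hD2 : zetaLogDerivReal ((2 * n + 2 : ℕ) : ℝ) ≤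
      zetaLogDerivReal ((2 * m + 2 : ℕ) : ℝ) := by
    refine zetaLogDerivReal_mono ?_ ?_
    · exact_mod_cast Nat.lt_of_lt_of_le one_lt_two (by omega : 2 ≤ 2 * n + 2)
    · exact_mod_cast (by omega : 2 * n + 2 ≤ 2 * m + 2)
  have hD3 : zetaLogDerivReal ((k - 2 * m - 2 : ℕ) : ℝ) ≤
      zetaLogDerivReal ((k - 2 * n - 2 : ℕ) : ℝ) := by
    refine zetaLogDerivReal_mono ?_ ?_
    · exact_mod_cast Nat.lt_of_lt_of_le one_lt_two h4
    · exact_mod_cast h5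
  constructor <;> [skip; skip] <;>
  · simp only at hH1 hH2 hH3
    linarith
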